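/- arXiv:1710.04690 — 6 statements merged into one kernel-verified Lean document; each statement's English description precedes it below -/
import Mathlib

section
/- Let S be a topologically closed subset of the positive real numbers. Then S satisfies the 4-values condition if and only if the operation ⊕_S is associative on S, i.e., (a ⊕_S b) ⊕_S c = a ⊕_S (b ⊕_S c) for all a, b, c ∈ S. -/
/-- `a ⊕_S b = sup {x ∈ S : x ≤ a + b}`. -/
noncomputable def oplusOp (S : Set ℝ) (a b : ℝ) : ℝ :=
  sSup {x : ℝ | x ∈ S ∧ x ≤ a + b}

/-- The triple `(a, b, c)` satisfies all three triangle inequalities. -/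
def IsTriangle (a b c : ℝ) : Prop :=
  a ≤ b + c ∧ b ≤ a + c ∧ c ≤ a + b

/-- The 4-values condition for a set `S` of positive reals. -/
def FourValues (S : Set ℝ) : Prop :=
  ∀ a ∈ S, ∀ b ∈ S, ∀ c ∈ S, ∀ d ∈ S,
    (∃ x ∈ S, IsTriangle a b x ∧ IsTriangle c d x) →
    (∃ y ∈ S, IsTriangle a c y ∧ IsTriangle b d y)

section Aux

variable {S : Set ℝ}

lemma oplus_bdd (a b : ℝ) : BddAbove {x : ℝ | x ∈ S ∧ x ≤ a + b} :=
  ⟨a + b, fun _ hx => hx.2⟩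

lemma le_oplus {a b x : ℝ} (hx : x ∈ S) (h : x ≤ a + b) : x ≤ oplusOp S a b :=
  le_csSup (oplus_bdd a b) ⟨hx, h⟩

lemma oplus_mem_le (hclosed : IsClosed S) (hpos : ∀ x ∈ S, 0 < x)
    {a b : ℝ} (ha : a ∈ S) (hb : b ∈ S) :
    oplusOp S a b ∈ S ∧ oplusOp S a b ≤ a + b := by
  have hne : Set.Nonempty {x : ℝ | x ∈ S ∧ x ≤ a + b} :=
    ⟨a, ha, by linarith [hpos b hb]⟩
  have hcl : IsClosed {x : ℝ | x ∈ S ∧ x ≤ a + b} := hclosed.inter isClosed_Iic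
  have hmem := hcl.csSup_mem hne (oplus_bdd a b)
  exact ⟨hmem.1, hmem.2⟩

lemma left_le_oplus (hpos : ∀ x ∈ S, 0 < x) {a b : ℝ} (ha : a ∈ S) (hb : b ∈ S) :
    a ≤ oplusOp S a b :=
  le_oplus ha (by linarith [hpos b hb])

lemma right_le_oplus (hpos : ∀ x ∈ S, 0 < x) {a b : ℝ} (ha : a ∈ S) (hb : b ∈ S) :
    b ≤ oplusOp S a b :=
  le_oplus hb (by linarith [hpos a ha])

lemma oplus_comm (S : Set ℝ) (a b : ℝ) : oplusOp S a b = oplusOp S b a := by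
  simp only [oplusOp, add_comm]

lemma oplus_mono (hpos : ∀ x ∈ S, 0 < x) {a b b' : ℝ} (ha : a ∈ S) (hb : b ∈ S)
    (h : b ≤ b') : oplusOp S a b ≤ oplusOp S a b' := by
  refine csSup_le_csSup (oplus_bdd a b') ⟨a, ha, by linarith [hpos b hb]⟩ ?_
  rintro x ⟨hxS, hx⟩
  exact ⟨hxS, by linarith⟩

end Aux

theorem fourValues_iff_assoc (S : Set ℝ) (hclosed : IsClosed S)
    (hpos : ∀ x ∈ S, 0 < x) :
    FourValues S ↔
      ∀ a ∈ S, ∀ b ∈ S, ∀ c ∈ S,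
        oplusOp S (oplusOp S a b) c = oplusOp S a (oplusOp S b c) := by
  -- auxiliary: one-sided associativity inequality from the 4-values condition
  have key : FourValues S → ∀ a ∈ S, ∀ b ∈ S, ∀ c ∈ S,
      oplusOp S (oplusOp S a b) c ≤ oplusOp S a (oplusOp S b c) := by
    intro h4 a ha b hb c hc
    set u := oplusOp S a b with hu
    obtain ⟨huS, hule⟩ := oplus_mem_le hclosed hpos ha hb
    set e := oplusOp S u c with he
    obtain ⟨heS, hele⟩ := oplus_mem_le hclosed hpos huS hc
    have hau : a ≤ u := left_le_oplus hpos ha hb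
    have hbu : b ≤ u := right_le_oplus hpos ha hb
    have hue : u ≤ e := left_le_oplus hpos huS hc
    have hce : c ≤ e := right_le_oplus hpos huS hc
    -- apply 4-values to pairs {e,c} and {a,b} with common x = u
    obtain ⟨y, hyS, hy1, hy2⟩ :=
      h4 e heS c hc a ha b hb
        ⟨u, huS, ⟨by linarith, by linarith, by linarith⟩,
          ⟨by linarith, by linarith, by linarith⟩⟩
    -- hy1 : IsTriangle e a y, hy2 : IsTriangle c b y
    have hyle : y ≤ oplusOp S b c := le_oplus hyS (by linarith [hy2.2.2])
    exact le_oplus heS (by linarith [hy1.1])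
  constructor
  · -- 4-values → associativity
    intro h4 a ha b hb c hc
    refine le_antisymm (key h4 a ha b hb c hc) ?_
    have h2 := key h4 c hc b hb a ha
    calc oplusOp S a (oplusOp S b c)
        = oplusOp S (oplusOp S c b) a := by rw [oplus_comm S b c, oplus_comm]
      _ ≤ oplusOp S c (oplusOp S b a) := h2
      _ = oplusOp S (oplusOp S a b) c := by rw [oplus_comm S b a, oplus_comm]
  · -- associativity → 4-values
    intro hassoc a ha b hb c hc d hd ⟨x, hxS, hT1, hT2⟩
    obtain ⟨hta1, hta2, hta3⟩ := hT1
    obtain ⟨htc1, htc2, htc3⟩ := hT2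
    set p := oplusOp S a c with hp
    set q := oplusOp S b d with hq
    obtain ⟨hpS, hple⟩ := oplus_mem_le hclosed hpos ha hc
    obtain ⟨hqS, hqle⟩ := oplus_mem_le hclosed hpos hb hd
    have hap : a ≤ p := left_le_oplus hpos ha hc
    have hcp : c ≤ p := right_le_oplus hpos ha hc
    have hbq : b ≤ q := left_le_oplus hpos hb hd
    have hdq : d ≤ q := right_le_oplus hpos hb hd
    -- key inequality 1 : a ≤ q + c
    have key1 : a ≤ q + c := by
      have h1 : a ≤ oplusOp S b x := le_oplus ha hta1
      have h2 : x ≤ oplusOp S d c := le_oplus hxS (by linarith)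
      obtain ⟨hdcS, hdcle⟩ := oplus_mem_le hclosed hpos hd hc
      have h3 : oplusOp S b x ≤ oplusOp S b (oplusOp S d c) :=
        oplus_mono hpos hb hxS h2
      have h4 : oplusOp S b (oplusOp S d c) = oplusOp S q c := by
        rw [hq, ← hassoc b hb d hd c hc]
      obtain ⟨_, h5⟩ := oplus_mem_le hclosed hpos hqS hc
      linarith
    -- key inequality 2 : c ≤ q + a
    have key2 : c ≤ q + a := by
      have h1 : c ≤ oplusOp S d x := le_oplus hc htc1
      have h2 : x ≤ oplusOp S b a := le_oplus hxS (by linarith)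
      obtain ⟨hbaS, hbale⟩ := oplus_mem_le hclosed hpos hb ha
      have h3 : oplusOp S d x ≤ oplusOp S d (oplusOp S b a) :=
        oplus_mono hpos hd hxS h2
      have h4 : oplusOp S d (oplusOp S b a) = oplusOp S (oplusOp S d b) a := by
        rw [← hassoc d hd b hb a ha]
      have h6 : oplusOp S d b = q := oplus_comm S d b
      obtain ⟨_, h5⟩ := oplus_mem_le hclosed hpos hqS ha
      rw [h6] at h4
      linarith
    -- key inequality 3 : b ≤ p + d
    have key3 : b ≤ p + d := by
      have h1 : b ≤ oplusOp S a x := le_oplus hb hta2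
      have h2 : x ≤ oplusOp S c d := le_oplus hxS (by linarith)
      have h3 : oplusOp S a x ≤ oplusOp S a (oplusOp S c d) :=
        oplus_mono hpos ha hxS h2
      have h4 : oplusOp S a (oplusOp S c d) = oplusOp S p d := by
        rw [hp, ← hassoc a ha c hc d hd]
      obtain ⟨_, h5⟩ := oplus_mem_le hclosed hpos hpS hd
      linarith
    -- key inequality 4 : d ≤ p + b
    have key4 : d ≤ p + b := by
      have h1 : d ≤ oplusOp S c x := le_oplus hd htc2
      have h2 : x ≤ oplusOp S a b := le_oplus hxS (by linarith)
      have h3 : oplusOp S c x ≤ oplusOp S c (oplusOp S a b) :=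
        oplus_mono hpos hc hxS h2
      have h4 : oplusOp S c (oplusOp S a b) = oplusOp S (oplusOp S c a) b := by
        rw [← hassoc c hc a ha b hb]
      have h6 : oplusOp S c a = p := oplus_comm S c a
      obtain ⟨_, h5⟩ := oplus_mem_le hclosed hpos hpS hb
      rw [h6] at h4
      linarith
    rcases le_total p q with hmin | hmin
    · exact ⟨p, hpS, ⟨by linarith, by linarith, by linarith⟩,
        ⟨by linarith, by linarith, by linarith⟩⟩
    · exact ⟨q, hqS, ⟨by linarith, by linarith, by linarith⟩,
        ⟨by linarith, by linarith, by linarith⟩⟩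
end

section
/- Let 𝔐 = (M, ⊕, ⪯, 0) be an archimedean distance monoid and let a, b ∈ M with b ≻ 0. Then either a ⊕ b ≻ a, or a is the maximal element of M (i.e., c ⪯ a for every c ∈ M). -/
/-- Let `𝔐 = (M, ⊕, ⪯, 0)` be an archimedean distance monoid and `a b : M` with
`0 ≺ b`. Then either `a ≺ a ⊕ b` or `a` is the maximal element of `M`. -/
theorem add_lt_or_max_of_archimedean {M : Type*} [AddCommMonoid M] [LinearOrder M]
    (hzero : ∀ a : M, 0 ≤ a)
    (hmono : ∀ a b c d : M, a ≤ c → b ≤ d → a + b ≤ c + d)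
    (harch : ∀ r s : M, 0 < r → 0 < s → ∃ n : ℕ, 0 < n ∧ s ≤ n • r)
    (a b : M) (hb : 0 < b) :
    a < a + b ∨ ∀ c : M, c ≤ a := by
  rcases lt_or_ge a (a + b) with h | h
  · exact Or.inl h
  · right
    have heq : a + b = a := le_antisymm h (by
      have := hmono a 0 a b le_rfl hb.le
      simpa using this)
    have key : ∀ n : ℕ, a + n • b = a := by
      intro n
      induction n with
      | zero => simp
      | succ k ih =>
        rw [succ_nsmul, ← add_assoc, ih, heq]
    intro c
    rcases eq_or_lt_of_le (hzero c) with hc | hc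
    · exact hc ▸ hzero a
    · obtain ⟨n, -, hn⟩ := harch b c hb hc
      calc c ≤ n • b := hn
        _ ≤ a + n • b := by simpa using hmono 0 (n • b) a (n • b) (hzero a) le_rfl
        _ = a := key n
end

section
/- Let 𝔐 = (M, ⊕, ⪯, 0) be a distance monoid and let G = (G, d) be a finite connected 𝔐-graph that is 𝔐-metric. For distinct u, v ∈ G define d'(u, v) to be the ⪯-minimum of the 𝔐-lengths of all paths from u to v, and set d'(u, u) = 0. Then (G, d') is an 𝔐-metric space, and d'(u, v) = d(u, v) whenever d(u, v) is defined. -/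
/-- `p` is a path from `u` to `v` in the `𝔐`-graph with (partial, `Option`-valued)
edge function `E`: it starts at `u`, ends at `v`, has no repeated vertices, and
consecutive vertices are joined by edges. -/
def IsPathFrom {M V : Type*} (E : V → V → Option M) (u v : V) (p : List V) : Prop :=
  p.head? = some u ∧ p.getLast? = some v ∧ p.Nodup ∧
    p.Chain' fun a b => (E a b).isSome

/-- The `𝔐`-length of a walk `p`: the sum of the edge labels of consecutive pairs. -/
def walkLength {M V : Type*} [AddCommMonoid M] (E : V → V → Option M)
    (p : List V) : M :=
  ((p.zip p.tail).map fun q => (E q.1 q.2).getD 0).sum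

/-!
Since lengths are nonnegative and `⊕` is monotone, cutting a closed subwalk out of a walk does
not increase its length, so every walk from `u` to `v` can be shortened to a path and `d' u v`
is the least length of any walk. Concatenating and reversing walks then gives the triangle
inequality and symmetry of `d'`. Conversely, by the triangle inequality any metric agreeing with
`d` on edges is bounded by the length of every walk, hence lies below `d'`; this separates points
for `d'` and, together with the one-edge path, shows that `d'` extends `d`.
-/


section Walks

variable {M V : Type*} (E : V → V → Option M)

def IsWalkFrom (u v : V) (p : List V) : Prop :=
  p.head? = some u ∧ p.getLast? = some v ∧ p.IsChain fun a b => (E a b).isSome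

variable {E}

theorem isPathFrom_iff {u v : V} {p : List V} :
    IsPathFrom E u v p ↔ IsWalkFrom E u v p ∧ p.Nodup :=
  ⟨fun ⟨hu, hv, hnd, hE⟩ => ⟨⟨hu, hv, hE⟩, hnd⟩, fun ⟨⟨hu, hv, hE⟩, hnd⟩ => ⟨hu, hv, hnd, hE⟩⟩

theorem isWalkFrom_singleton_iff {u v a : V} : IsWalkFrom E u v [a] ↔ a = u ∧ a = v := by
  simp only [IsWalkFrom, List.head?_cons, List.getLast?_singleton, Option.some.injEq,
    List.isChain_singleton, and_true]

theorem isWalkFrom_cons_cons_iff {u v a b : V} {t : List V} :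
    IsWalkFrom E u v (a :: b :: t) ↔ a = u ∧ (E a b).isSome ∧ IsWalkFrom E b v (b :: t) := by
  simp only [IsWalkFrom, List.head?_cons, Option.some.injEq, List.getLast?_cons_cons,
    List.isChain_cons_cons, true_and]
  tauto

theorem IsWalkFrom.append {u v w : V} {p q : List V} (hp : IsWalkFrom E u v p)
    (hq : IsWalkFrom E v w q) : IsWalkFrom E u w (p ++ q.tail) := by
  obtain ⟨hpu, hpv, hpE⟩ := hp
  obtain ⟨hqv, hqw, hqE⟩ := hq
  obtain ⟨p, rfl⟩ := List.getLast?_eq_some_iff.mp hpv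
  obtain ⟨q, rfl⟩ := List.head?_eq_some_iff.mp hqv
  rw [List.tail_cons, List.append_assoc, List.singleton_append]
  refine ⟨?_, ?_, ?_⟩
  · obtain ⟨r, hr⟩ := List.head?_eq_some_iff.mp hpu
    rw [← List.singleton_append, ← List.append_assoc, hr]
    rfl
  · rwa [List.getLast?_append_cons]
  · rw [List.isChain_split]
    exact ⟨hpE, hqE⟩

theorem IsPathFrom.reverse (hE : ∀ u v, E u v = E v u) {u v : V} {p : List V}
    (hp : IsPathFrom E u v p) : IsPathFrom E v u p.reverse := by
  obtain ⟨⟨hpu, hpv, hpE⟩, hnd⟩ := isPathFrom_iff.mp hp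
  refine isPathFrom_iff.mpr ⟨⟨?_, ?_, ?_⟩, List.nodup_reverse.mpr hnd⟩
  · rwa [List.head?_reverse]
  · rwa [List.getLast?_reverse]
  · rw [List.isChain_reverse]
    exact hpE.imp fun a b hab => by rwa [hE]

theorem IsPathFrom.cons {a b v : V} {q : List V} (hab : (E a b).isSome) (ha : a ∉ q)
    (hq : IsPathFrom E b v q) : IsPathFrom E a v (a :: q) := by
  obtain ⟨⟨hqb, hqv, hqE⟩, hnd⟩ := isPathFrom_iff.mp hq
  obtain ⟨q, rfl⟩ := List.head?_eq_some_iff.mp hqb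
  exact isPathFrom_iff.mpr ⟨isWalkFrom_cons_cons_iff.mpr ⟨rfl, hab, hqb, hqv, hqE⟩,
    List.nodup_cons.mpr ⟨ha, hnd⟩⟩

theorem IsPathFrom.of_append_cons {u v a : V} {q₁ q₂ : List V}
    (hq : IsPathFrom E u v (q₁ ++ a :: q₂)) : IsPathFrom E a v (a :: q₂) := by
  obtain ⟨⟨-, hqv, hqE⟩, hnd⟩ := isPathFrom_iff.mp hq
  refine isPathFrom_iff.mpr ⟨⟨rfl, ?_, (List.isChain_split.mp hqE).2⟩, ?_⟩
  · rwa [List.getLast?_append_cons] at hqv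
  · exact hnd.sublist (List.sublist_append_right _ _)

end Walks

section Length

variable {M V : Type*} [AddCommMonoid M] (E : V → V → Option M)

@[simp]
theorem walkLength_singleton (a : V) : walkLength E [a] = 0 := by
  simp [walkLength]

@[simp]
theorem walkLength_cons_cons (a b : V) (l : List V) :
    walkLength E (a :: b :: l) = (E a b).getD 0 + walkLength E (b :: l) := by
  simp [walkLength]

theorem walkLength_cons_of_head?_eq {a b : V} {q : List V} (h : q.head? = some b) :
    walkLength E (a :: q) = (E a b).getD 0 + walkLength E q := by
  obtain ⟨q, rfl⟩ := List.head?_eq_some_iff.mp h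
  exact walkLength_cons_cons E a b q

theorem walkLength_append_cons (y : V) (ys : List V) : ∀ xs : List V,
    walkLength E (xs ++ y :: ys) = walkLength E (xs ++ [y]) + walkLength E (y :: ys)
  | [] => by simp
  | [x] => by simp
  | x :: x' :: xs => by
    have ih := walkLength_append_cons y ys (x' :: xs)
    simp only [List.cons_append, walkLength_cons_cons] at ih ⊢
    rw [ih, add_assoc]

variable {E}

theorem IsWalkFrom.walkLength_append {u v w : V} {p q : List V} (hp : IsWalkFrom E u v p)
    (hq : IsWalkFrom E v w q) :
    walkLength E (p ++ q.tail) = walkLength E p + walkLength E q := by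
  obtain ⟨p, rfl⟩ := List.getLast?_eq_some_iff.mp hp.2.1
  obtain ⟨q, rfl⟩ := List.head?_eq_some_iff.mp hq.1
  simpa using walkLength_append_cons E v q p

theorem walkLength_reverse (hE : ∀ u v, E u v = E v u) : ∀ p : List V,
    walkLength E p.reverse = walkLength E p
  | [] => rfl
  | [_] => rfl
  | a :: b :: t => by
    have hrev : (a :: b :: t).reverse = t.reverse ++ b :: [a] := by simp
    rw [hrev, walkLength_append_cons, ← List.reverse_cons, walkLength_reverse hE (b :: t),
      walkLength_cons_cons, walkLength_cons_cons, walkLength_singleton, add_zero, hE, add_comm]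

end Length

section Ordered

variable {M V : Type*} [AddCommMonoid M] [Preorder M] [IsOrderedAddMonoid M]
  {E : V → V → Option M}

theorem IsWalkFrom.le_walkLength {d : V → V → M} (hrefl : ∀ a, d a a = 0)
    (htri : ∀ a b c, d a c ≤ d a b + d b c) (hedge : ∀ u v x, E u v = some x → d u v ≤ x) :
    ∀ {u v : V} {p : List V}, IsWalkFrom E u v p → d u v ≤ walkLength E p
  | _, _, [], hp => absurd hp.1 (by simp)
  | _, _, [_], hp => by
    obtain ⟨rfl, rfl⟩ := isWalkFrom_singleton_iff.mp hp
    simp [hrefl]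
  | u, v, a :: b :: t, hp => by
    obtain ⟨rfl, hab, hbt⟩ := isWalkFrom_cons_cons_iff.mp hp
    obtain ⟨x, hx⟩ := Option.isSome_iff_exists.mp hab
    calc d a v ≤ d a b + d b v := htri a b v
      _ ≤ x + walkLength E (b :: t) :=
        add_le_add (hedge a b x hx) (hbt.le_walkLength hrefl htri hedge)
      _ = walkLength E (a :: b :: t) := by simp [hx]

theorem IsWalkFrom.exists_isPathFrom_walkLength_le (hzero : ∀ a : M, 0 ≤ a) :
    ∀ {u v : V} {p : List V}, IsWalkFrom E u v p →
      ∃ q, IsPathFrom E u v q ∧ walkLength E q ≤ walkLength E p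
  | _, _, [], hp => absurd hp.1 (by simp)
  | _, _, [a], hp => by
    obtain ⟨rfl, rfl⟩ := isWalkFrom_singleton_iff.mp hp
    exact ⟨[a], isPathFrom_iff.mpr ⟨hp, List.nodup_singleton a⟩, le_rfl⟩
  | u, v, a :: b :: t, hp => by
    obtain ⟨rfl, hab, hbt⟩ := isWalkFrom_cons_cons_iff.mp hp
    obtain ⟨q, hq, hqt⟩ := hbt.exists_isPathFrom_walkLength_le hzero
    by_cases ha : a ∈ q
    · obtain ⟨q₁, q₂, rfl⟩ := List.append_of_mem ha
      have hprepend : walkLength E (b :: t) ≤ walkLength E (a :: b :: t) := by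
        rw [walkLength_cons_cons]
        exact le_add_of_nonneg_left (hzero _)
      refine ⟨a :: q₂, hq.of_append_cons, ?_⟩
      calc walkLength E (a :: q₂) ≤ walkLength E (q₁ ++ [a]) + walkLength E (a :: q₂) :=
            le_add_of_nonneg_left (hzero _)
        _ = walkLength E (q₁ ++ a :: q₂) := (walkLength_append_cons E a q₂ q₁).symm
        _ ≤ walkLength E (a :: b :: t) := hqt.trans hprepend
    · refine ⟨a :: q, hq.cons hab ha, ?_⟩
      rw [walkLength_cons_of_head?_eq E hq.1, walkLength_cons_cons]
      exact add_le_add le_rfl hqt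

end Ordered

def IsShortestPathDist {M V : Type*} [AddCommMonoid M] [LE M] (E : V → V → Option M)
    (d' : V → V → M) : Prop :=
  ∀ u v : V, u ≠ v →
    (∃ p : List V, IsPathFrom E u v p ∧ walkLength E p = d' u v) ∧
    (∀ p : List V, IsPathFrom E u v p → d' u v ≤ walkLength E p)

namespace IsShortestPathDist

variable {M V : Type*} [AddCommMonoid M] [PartialOrder M] {E : V → V → Option M}
  {d' : V → V → M}

theorem le_symm (h : IsShortestPathDist E d') (hE : ∀ u v, E u v = E v u) {u v : V}
    (huv : u ≠ v) : d' u v ≤ d' v u := by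
  obtain ⟨p, hp, hpd⟩ := (h v u huv.symm).1
  calc d' u v ≤ walkLength E p.reverse := (h u v huv).2 _ (hp.reverse hE)
    _ = d' v u := by rw [walkLength_reverse hE, hpd]

theorem symm (h : IsShortestPathDist E d') (hE : ∀ u v, E u v = E v u) (u v : V) :
    d' u v = d' v u := by
  rcases eq_or_ne u v with rfl | huv
  · rfl
  · exact (h.le_symm hE huv).antisymm (h.le_symm hE huv.symm)

variable [IsOrderedAddMonoid M]

theorem le_walkLength (h : IsShortestPathDist E d') (hzero : ∀ a : M, 0 ≤ a) {u v : V}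
    {p : List V} (huv : u ≠ v) (hp : IsWalkFrom E u v p) : d' u v ≤ walkLength E p := by
  obtain ⟨q, hq, hqp⟩ := hp.exists_isPathFrom_walkLength_le hzero
  exact ((h u v huv).2 q hq).trans hqp

theorem dist_le_of_ne (h : IsShortestPathDist E d') {d : V → V → M} (hrefl : ∀ a, d a a = 0)
    (htri : ∀ a b c, d a c ≤ d a b + d b c) (hedge : ∀ u v x, E u v = some x → d u v ≤ x)
    {u v : V} (huv : u ≠ v) : d u v ≤ d' u v := by
  obtain ⟨p, hp, hpd⟩ := (h u v huv).1
  exact hpd ▸ (isPathFrom_iff.mp hp).1.le_walkLength hrefl htri hedge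

theorem triangle (h : IsShortestPathDist E d') (hzero : ∀ a : M, 0 ≤ a)
    (hrefl : ∀ u, d' u u = 0) (a b c : V) : d' a c ≤ d' a b + d' b c := by
  rcases eq_or_ne a b with rfl | hab
  · rw [hrefl, zero_add]
  rcases eq_or_ne b c with rfl | hbc
  · rw [hrefl, add_zero]
  rcases eq_or_ne a c with rfl | hac
  · rw [hrefl]
    exact hzero _
  obtain ⟨p, hp, hpd⟩ := (h a b hab).1
  obtain ⟨q, hq, hqd⟩ := (h b c hbc).1
  have hp := (isPathFrom_iff.mp hp).1
  have hq := (isPathFrom_iff.mp hq).1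
  rw [← hpd, ← hqd, ← hp.walkLength_append hq]
  exact h.le_walkLength hzero hac (hp.append hq)

theorem eq_zero_iff (h : IsShortestPathDist E d') (hzero : ∀ a : M, 0 ≤ a)
    (hrefl : ∀ u, d' u u = 0) {d : V → V → M} (hd : ∀ a b, d a b = 0 ↔ a = b)
    (htri : ∀ a b c, d a c ≤ d a b + d b c) (hedge : ∀ u v x, E u v = some x → d u v ≤ x)
    (u v : V) : d' u v = 0 ↔ u = v := by
  refine ⟨fun h0 => ?_, fun huv => huv ▸ hrefl u⟩
  by_contra huv
  have hle := h.dist_le_of_ne (fun a => (hd a a).2 rfl) htri hedge huv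
  exact huv ((hd u v).1 (le_antisymm (h0 ▸ hle) (hzero _)))

theorem eq_of_edge (h : IsShortestPathDist E d') (hzero : ∀ a : M, 0 ≤ a)
    (hrefl : ∀ u, d' u u = 0) {d : V → V → M} (hd : ∀ a b, d a b = 0 ↔ a = b)
    (htri : ∀ a b c, d a c ≤ d a b + d b c) (hedge : ∀ u v x, E u v = some x → d u v = x)
    {u v : V} {x : M} (hx : E u v = some x) : d' u v = x := by
  rcases eq_or_ne u v with rfl | huv
  · rw [hrefl, ← hedge u u x hx, (hd u u).2 rfl]
  have hwalk : IsWalkFrom E u v [u, v] :=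
    isWalkFrom_cons_cons_iff.mpr ⟨rfl, by simp [hx], isWalkFrom_singleton_iff.mpr ⟨rfl, rfl⟩⟩
  refine le_antisymm ?_ ?_
  · simpa [hx] using h.le_walkLength hzero huv hwalk
  · rw [← hedge u v x hx]
    exact h.dist_le_of_ne (fun a => (hd a a).2 rfl) htri (fun a b y hy => (hedge a b y hy).le)
      huv

end IsShortestPathDist

theorem shortest_path_completion_general {M V : Type*} [AddCommMonoid M] [LinearOrder M]
    (hzero : ∀ a : M, 0 ≤ a)
    (hmono : ∀ a b c d : M, a ≤ c → b ≤ d → a + b ≤ c + d)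
    (E : V → V → Option M)
    (hEsymm : ∀ u v : V, E u v = E v u)
    (hmetric : ∃ dm : V → V → M,
      (∀ a b : V, dm a b = 0 ↔ a = b) ∧ (∀ a b : V, dm a b = dm b a) ∧
      (∀ a b c : V, dm a c ≤ dm a b + dm b c) ∧
      (∀ u v : V, ∀ x : M, E u v = some x → dm u v = x))
    (d' : V → V → M)
    (hd'refl : ∀ u : V, d' u u = 0)
    (hd'min : ∀ u v : V, u ≠ v →
      (∃ p : List V, IsPathFrom E u v p ∧ walkLength E p = d' u v) ∧
      (∀ p : List V, IsPathFrom E u v p → d' u v ≤ walkLength E p)) :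
    ((∀ a b : V, d' a b = 0 ↔ a = b) ∧ (∀ a b : V, d' a b = d' b a) ∧
      (∀ a b c : V, d' a c ≤ d' a b + d' b c)) ∧
    (∀ u v : V, ∀ x : M, E u v = some x → d' u v = x) := by
  obtain ⟨dm, hdm, -, hdm_tri, hdm_edge⟩ := hmetric
  have : IsOrderedAddMonoid M := ⟨fun a b hab c => hmono a c b c hab le_rfl,
    fun a b hab c => hmono c a c b le_rfl hab⟩
  have hd' : IsShortestPathDist E d' := hd'min
  exact ⟨⟨hd'.eq_zero_iff hzero hd'refl hdm hdm_tri fun u v x hx => (hdm_edge u v x hx).le,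
    hd'.symm hEsymm, hd'.triangle hzero hd'refl⟩,
    fun u v x hx => hd'.eq_of_edge hzero hd'refl hdm hdm_tri hdm_edge hx⟩

/-- Shortest path completion: if `G = (G, d)` is a finite connected `𝔐`-metric
`𝔐`-graph and `d'` assigns `0` on the diagonal and to distinct `u, v` the
`⪯`-minimum of the `𝔐`-lengths of the paths from `u` to `v`, then `(G, d')` is an
`𝔐`-metric space agreeing with `d` wherever `d` is defined. -/
theorem shortest_path_completion {M V : Type*} [AddCommMonoid M] [LinearOrder M]
    [Fintype V]
    (hzero : ∀ a : M, 0 ≤ a)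
    (hmono : ∀ a b c d : M, a ≤ c → b ≤ d → a + b ≤ c + d)
    (E : V → V → Option M)
    (hEsymm : ∀ u v : V, E u v = E v u)
    (hEirr : ∀ u : V, E u u = none)
    (hEpos : ∀ u v : V, ∀ x : M, E u v = some x → x ≠ 0)
    (hconn : ∀ u v : V, u ≠ v → ∃ p : List V, IsPathFrom E u v p)
    (hmetric : ∃ dm : V → V → M,
      (∀ a b : V, dm a b = 0 ↔ a = b) ∧ (∀ a b : V, dm a b = dm b a) ∧
      (∀ a b c : V, dm a c ≤ dm a b + dm b c) ∧
      (∀ u v : V, ∀ x : M, E u v = some x → dm u v = x))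
    (d' : V → V → M)
    (hd'refl : ∀ u : V, d' u u = 0)
    (hd'min : ∀ u v : V, u ≠ v →
      (∃ p : List V, IsPathFrom E u v p ∧ walkLength E p = d' u v) ∧
      (∀ p : List V, IsPathFrom E u v p → d' u v ≤ walkLength E p)) :
    ((∀ a b : V, d' a b = 0 ↔ a = b) ∧ (∀ a b : V, d' a b = d' b a) ∧
      (∀ a b c : V, d' a c ≤ d' a b + d' b c)) ∧
    (∀ u v : V, ∀ x : M, E u v = some x → d' u v = x) :=
  shortest_path_completion_general hzero hmono E hEsymm hmetric d' hd'refl hd'min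
end

section
/- Let 𝔐 = (M, ⊕, ⪯, 0) be a distance monoid and let G = (G, d) be a finite 𝔐-graph. If there exists a sequence of vertices v_1, v_2, …, v_n (n ≥ 3, vertices not necessarily distinct) such that d(v_i, v_{i+1}) is defined for all 1 ≤ i < n, d(v_1, v_n) is defined, and d(v_1, v_n) ≻ d(v_1, v_2) ⊕ ⋯ ⊕ d(v_{n-1}, v_n), then there exists such a sequence consisting of pairwise distinct vertices. -/
/-!
Take a closed walk `v 0, …, v k` whose chord `v 0 — v k` outweighs the walk, with `k` minimal.
If `v a = v b` for some `a < b`, cutting out the closed subwalk `v a, …, v b` leaves a shorter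
walk with the same chord whose weights form a sub-sum of the original ones; since all weights are
nonnegative and addition is monotone, it is again outweighed by the chord, contradicting
minimality. Finally `k ≥ 2`: for `k = 0` the chord would be a loop, and for `k = 1` it would be
the single edge of the walk itself.
-/

open Finset

section

variable {M V : Type*} [AddCommMonoid M] [Preorder M]

/-- The walk `v 0, …, v k` with edge weights `e 0, …, e (k - 1)`, outweighed by the chord
`v 0 — v k`. Indexing by `ℕ` rather than `Fin` keeps the cutting below free of casts; only the
first `k + 1` values of `v` and `k` values of `e` matter. -/
structure IsNonmetricWalk (E : V → V → Option M) (k : ℕ) (v : ℕ → V) (e : ℕ → M) (ℓ : M) :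
    Prop where
  edge : ∀ i < k, E (v i) (v (i + 1)) = some (e i)
  chord : E (v 0) (v k) = some ℓ
  sum_lt : ∑ i ∈ range k, e i < ℓ

def skipBlock (a m t : ℕ) : ℕ := if t < a then t else t + m

namespace IsNonmetricWalk

variable {E : V → V → Option M} {k : ℕ} {v : ℕ → V} {e : ℕ → M} {ℓ : M}

theorem two_le (hEirr : ∀ u : V, E u u = none) (h : IsNonmetricWalk E k v e ℓ) : 2 ≤ k := by
  match k, h with
  | 0, h => simpa [hEirr] using h.chord
  | 1, h =>
    have hℓ : e 0 = ℓ := Option.some.inj ((h.edge 0 zero_lt_one).symm.trans h.chord)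
    exact absurd h.sum_lt (by simp [hℓ])
  | _ + 2, _ => omega

theorem shortcut [AddLeftMono M] (hzero : ∀ x : M, 0 ≤ x) (h : IsNonmetricWalk E k v e ℓ)
    {a b : ℕ} (hab : a < b) (hbk : b ≤ k) (hv : v a = v b) :
    IsNonmetricWalk E (k - (b - a)) (v ∘ skipBlock a (b - a)) (e ∘ skipBlock a (b - a)) ℓ := by
  have hsucc : ∀ t, v (skipBlock a (b - a) (t + 1)) = v (skipBlock a (b - a) t + 1) := by
    intro t
    rcases lt_trichotomy (t + 1) a with ht | rfl | ht
    · simp only [skipBlock, if_pos ht, if_pos (Nat.lt_of_succ_lt ht)]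
    · simp only [skipBlock, lt_irrefl, if_false, Nat.lt_succ_self, if_true, hv]
      congr 1
      omega
    · simp only [skipBlock, if_neg (Nat.not_lt_of_gt ht), if_neg (by omega : ¬t < a)]
      congr 1
      omega
  have hinj : Set.InjOn (skipBlock a (b - a)) (range (k - (b - a))) := by
    intro s _ t _ hst
    simp only [skipBlock] at hst
    split_ifs at hst <;> omega
  refine ⟨fun t ht => ?_, ?_, ?_⟩
  · simp only [Function.comp_apply, hsucc]
    exact h.edge _ (by simp only [skipBlock]; split_ifs <;> omega)
  · have h0 : v (skipBlock a (b - a) 0) = v 0 := by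
      by_cases ha : a = 0
      · subst ha; simp [skipBlock, hv]
      · simp [skipBlock, Nat.pos_of_ne_zero ha]
    have hlast : skipBlock a (b - a) (k - (b - a)) = k := by
      simp only [skipBlock]; split_ifs <;> omega
    simpa only [Function.comp_apply, h0, hlast] using h.chord
  · calc ∑ t ∈ range (k - (b - a)), e (skipBlock a (b - a) t)
        = ∑ i ∈ (range (k - (b - a))).image (skipBlock a (b - a)), e i := (sum_image hinj).symm
      _ ≤ ∑ i ∈ range k, e i := by
        refine sum_le_sum_of_subset_of_nonneg ?_ fun i _ _ => hzero (e i)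
        intro i hi
        obtain ⟨t, ht, rfl⟩ := mem_image.1 hi
        simp only [mem_range, skipBlock] at ht ⊢
        split_ifs <;> omega
      _ < ℓ := h.sum_lt

theorem exists_injOn [AddLeftMono M] (hzero : ∀ x : M, 0 ≤ x)
    (h : IsNonmetricWalk E k v e ℓ) :
    ∃ (k' : ℕ) (v' : ℕ → V) (e' : ℕ → M),
      IsNonmetricWalk E k' v' e' ℓ ∧ Set.InjOn v' (Set.Iic k') := by
  induction k using Nat.strong_induction_on generalizing v e with
  | _ k ih =>
    by_cases hinj : Set.InjOn v (Set.Iic k)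
    · exact ⟨k, v, e, h, hinj⟩
    obtain ⟨a, ha, b, hb, hvab, hne⟩ : ∃ a ≤ k, ∃ b ≤ k, v a = v b ∧ a ≠ b := by
      simpa [Set.InjOn] using hinj
    rcases hne.lt_or_gt with hab | hba
    · exact ih _ (by omega) (h.shortcut hzero hab hb hvab)
    · exact ih _ (by omega) (h.shortcut hzero hba ha hvab.symm)

end IsNonmetricWalk

theorem isNonmetricWalk_of_fin {E : V → V → Option M} {k : ℕ} {v : Fin (k + 1) → V}
    {e : Fin k → M} {ℓ : M} (hedge : ∀ i : Fin k, E (v i.castSucc) (v i.succ) = some (e i))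
    (hchord : E (v 0) (v (Fin.last k)) = some ℓ) (hsum : ∑ i, e i < ℓ) :
    IsNonmetricWalk E k (fun n => if hn : n < k + 1 then v ⟨n, hn⟩ else v 0)
      (fun n => if hn : n < k then e ⟨n, hn⟩ else 0) ℓ where
  edge i hi := by simpa [hi, Nat.lt_succ_of_lt hi] using hedge ⟨i, hi⟩
  chord := by simpa [Fin.last] using hchord
  sum_lt := by
    rw [← Fin.sum_univ_eq_sum_range]
    simpa using hsum

theorem IsNonmetricWalk.fin_val {E : V → V → Option M} {k : ℕ} {v : ℕ → V} {e : ℕ → M} {ℓ : M}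
    (h : IsNonmetricWalk E k v e ℓ) :
    (∀ i : Fin k, E (v i.castSucc) (v i.succ) = some (e i)) ∧
      E (v (0 : Fin (k + 1))) (v (Fin.last k)) = some ℓ ∧ ∑ i : Fin k, e i < ℓ :=
  ⟨fun i => h.edge i i.2, h.chord, (Fin.sum_univ_eq_sum_range e k).symm ▸ h.sum_lt⟩

end

theorem nonmetric_cycle_of_homomorphic_image_general {M V : Type*} [AddCommMonoid M]
    [LinearOrder M]
    (hzero : ∀ a : M, 0 ≤ a)
    (hmono : ∀ a b c d : M, a ≤ c → b ≤ d → a + b ≤ c + d)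
    (E : V → V → Option M)
    (hEirr : ∀ u : V, E u u = none)
    (hcycle : ∃ (k : ℕ) (v : Fin (k + 1) → V) (e : Fin k → M) (ℓ : M),
        2 ≤ k ∧
        (∀ i : Fin k, E (v i.castSucc) (v i.succ) = some (e i)) ∧
        E (v 0) (v (Fin.last k)) = some ℓ ∧
        (∑ i, e i) < ℓ) :
    ∃ (k : ℕ) (v : Fin (k + 1) → V) (e : Fin k → M) (ℓ : M),
        2 ≤ k ∧ Function.Injective v ∧
        (∀ i : Fin k, E (v i.castSucc) (v i.succ) = some (e i)) ∧
        E (v 0) (v (Fin.last k)) = some ℓ ∧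
        (∑ i, e i) < ℓ := by
  have : AddLeftMono M := ⟨fun a _ _ h => hmono a _ a _ le_rfl h⟩
  obtain ⟨k, v, e, ℓ, -, hedge, hchord, hsum⟩ := hcycle
  obtain ⟨k', v', e', hwalk, hinj⟩ :=
    (isNonmetricWalk_of_fin hedge hchord hsum).exists_injOn hzero
  have hinj_fin : Function.Injective fun i : Fin (k' + 1) => v' i := fun i j hij =>
    Fin.ext (hinj (Nat.lt_succ_iff.1 i.2) (Nat.lt_succ_iff.1 j.2) hij)
  exact ⟨k', fun i => v' i, fun i => e' i, ℓ, hwalk.two_le hEirr, hinj_fin, hwalk.fin_val⟩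

/-- If a finite `𝔐`-graph contains a homomorphic image of a non-`𝔐`-metric cycle
(a sequence of not necessarily distinct vertices `v_1, …, v_n`, `n ≥ 3`, with all
consecutive distances and `d(v_1, v_n)` defined and
`d(v_1, v_n) ≻ d(v_1, v_2) ⊕ ⋯ ⊕ d(v_{n-1}, v_n)`), then it contains such a
sequence with pairwise distinct vertices. -/
theorem nonmetric_cycle_of_homomorphic_image {M V : Type*} [AddCommMonoid M]
    [LinearOrder M] [Fintype V]
    (hzero : ∀ a : M, 0 ≤ a)
    (hmono : ∀ a b c d : M, a ≤ c → b ≤ d → a + b ≤ c + d)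
    (E : V → V → Option M)
    (hEsymm : ∀ u v : V, E u v = E v u)
    (hEirr : ∀ u : V, E u u = none)
    (hEpos : ∀ u v : V, ∀ x : M, E u v = some x → x ≠ 0)
    (hcycle : ∃ (k : ℕ) (v : Fin (k + 1) → V) (e : Fin k → M) (ℓ : M),
        2 ≤ k ∧
        (∀ i : Fin k, E (v i.castSucc) (v i.succ) = some (e i)) ∧
        E (v 0) (v (Fin.last k)) = some ℓ ∧
        (∑ i, e i) < ℓ) :
    ∃ (k : ℕ) (v : Fin (k + 1) → V) (e : Fin k → M) (ℓ : M),
        2 ≤ k ∧ Function.Injective v ∧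
        (∀ i : Fin k, E (v i.castSucc) (v i.succ) = some (e i)) ∧
        E (v 0) (v (Fin.last k)) = some ℓ ∧
        (∑ i, e i) < ℓ :=
  nonmetric_cycle_of_homomorphic_image_general hzero hmono E hEirr hcycle
end

section
/- Let 𝔐 = (M, ⊕, ⪯, 0) be a distance monoid with only finitely many blocks and let S be a finite subset of M. Then for every nonzero block B of 𝔐 there exists an element mus(B, S) ∈ B such that for every ℓ ∈ S and every e ∈ S^⊕, one of the following holds: (1) ℓ ⪯ e ⊕ mus(B, S), or (2) e ⊕ b ≺ ℓ for every b ∈ B. -/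
/-!
Encode an element of `S^⊕` by the multiplicity vector `c : S → ℕ` of its summands; since
`0` is least, the sum grows with `c`. Fix `ℓ`. If no single `μ` in the block worked for all `e`,
we could repeatedly enlarge `μ` to a block element that rescues the current counterexample,
producing an increasing sequence `μ₀ ≤ μ₁ ≤ ⋯` together with counterexample vectors `c₀, c₁, …`.
By Dickson's lemma `cᵢ ≤ cⱼ` for some `i < j`, and then `μⱼ` already rescues `cⱼ`. Finally take
the maximum of these `μ` over the finitely many `ℓ ∈ S`.
-/

def blockRel {M : Type*} [AddCommMonoid M] [LinearOrder M] (a b : M) : Prop :=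
  (∃ m : ℕ, 0 < m ∧ b ≤ m • a) ∧ (∃ n : ℕ, 0 < n ∧ a ≤ n • b)

theorem blockRel_refl {M : Type*} [AddCommMonoid M] [LinearOrder M] (a : M) : blockRel a a :=
  ⟨⟨1, one_pos, (one_nsmul a).ge⟩, ⟨1, one_pos, (one_nsmul a).ge⟩⟩

section UniformWitness

variable {α β κ : Type*} [Preorder α] [WellQuasiOrderedLE α] [LinearOrder β]

theorem exists_uniform_witness {R : α → β → Prop}
    (hR : ∀ ⦃x x' b b'⦄, x ≤ x' → b ≤ b' → R x b → R x' b') {B : Set β} (hB : B.Nonempty) :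
    ∃ μ ∈ B, ∀ x, ∀ b ∈ B, R x b → R x μ := by
  by_contra! h
  obtain ⟨μ₀, hμ₀⟩ := hB
  have : Nonempty α := ⟨(h μ₀ hμ₀).choose⟩
  choose! x b hbB hRb hRμ using h
  let μ : ℕ → β := fun n => Nat.rec μ₀ (fun _ m => max (b m) m) n
  have hμB : ∀ n, μ n ∈ B := by
    intro n
    induction n with
    | zero => exact hμ₀
    | succ n ih => exact max_rec' B (hbB _ ih) ih
  have hμ_mono : Monotone μ := monotone_nat_of_le_succ fun n => le_max_right _ _
  obtain ⟨i, j, hij, hx⟩ := wellQuasiOrdered_le (x ∘ μ)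
  have hRi : R (x (μ i)) (μ (i + 1)) := hR le_rfl (le_max_left _ _) (hRb _ (hμB i))
  exact hRμ _ (hμB j) (hR hx (hμ_mono hij) hRi)

theorem exists_uniform_witness_finset {R : κ → α → β → Prop}
    (hR : ∀ k ⦃x x' b b'⦄, x ≤ x' → b ≤ b' → R k x b → R k x' b') {B : Set β}
    (hB : B.Nonempty) (s : Finset κ) :
    ∃ μ ∈ B, ∀ k ∈ s, ∀ x, ∀ b ∈ B, R k x b → R k x μ := by
  classical
  induction s using Finset.induction_on with
  | empty => exact ⟨hB.some, hB.some_mem, by simp⟩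
  | insert k s _ ih =>
    obtain ⟨μ, hμB, hμ⟩ := ih
    obtain ⟨ν, hνB, hν⟩ := exists_uniform_witness (hR k) hB
    refine ⟨max μ ν, max_rec' B hμB hνB, ?_⟩
    rintro k' hk' x b hb hRb
    rcases Finset.mem_insert.1 hk' with rfl | hk'
    · exact hR k' le_rfl (le_max_right _ _) (hν x b hb hRb)
    · exact hR k' le_rfl (le_max_left _ _) (hμ k' hk' x b hb hRb)

end UniformWitness

theorem monotone_sum_nsmul {ι M : Type*} [Fintype ι] [AddCommMonoid M] [Preorder M]
    [IsOrderedAddMonoid M] {v : ι → M} (hv : ∀ i, 0 ≤ v i) :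
    Monotone fun c : ι → ℕ => ∑ i, c i • v i :=
  fun _ _ h => Finset.sum_le_sum fun i _ => nsmul_le_nsmul_left (hv i) (h i)

theorem List.sum_eq_sum_count_nsmul {M : Type*} [AddCommMonoid M] [DecidableEq M] {l : List M}
    {S : Finset M} (h : ∀ x ∈ l, x ∈ S) : l.sum = ∑ s : S, l.count (s : M) • (s : M) := by
  rw [Finset.sum_coe_sort S fun s => l.count s • s, ← Multiset.sum_coe,
    Finset.sum_multiset_count_of_subset _ S fun x hx => h x (by simpa using hx)]
  simp only [Multiset.coe_count]

theorem exists_mus_general {M : Type*} [AddCommMonoid M] [LinearOrder M]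
    (hzero : ∀ a : M, 0 ≤ a)
    (hmono : ∀ a b c d : M, a ≤ c → b ≤ d → a + b ≤ c + d)
    (S : Finset M) :
    ∀ b₀ : M, b₀ ≠ 0 →
      ∃ mus : M, mus ≠ 0 ∧ blockRel b₀ mus ∧
        ∀ ℓ ∈ S, ∀ e : M,
          (∃ l : List M, l ≠ [] ∧ (∀ x ∈ l, x ∈ S) ∧ l.sum = e) →
          (ℓ ≤ e + mus ∨ ∀ b : M, b ≠ 0 → blockRel b₀ b → e + b < ℓ) := by
  classical
  intro b₀ hb₀
  have : IsOrderedAddMonoid M := { add_le_add_left := fun a b h c => hmono a c b c h le_rfl }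
  have hR : ∀ (ℓ : M) ⦃c c' : S → ℕ⦄ ⦃b b' : M⦄, c ≤ c' → b ≤ b' →
      ℓ ≤ ∑ s : S, c s • (s : M) + b → ℓ ≤ ∑ s : S, c' s • (s : M) + b' :=
    fun _ _ _ _ _ hc hb h => h.trans (add_le_add (monotone_sum_nsmul (fun s : S => hzero s) hc) hb)
  obtain ⟨mus, ⟨hmus₀, hmus⟩, hmus_le⟩ := exists_uniform_witness_finset hR
    (B := {x | x ≠ 0 ∧ blockRel b₀ x}) ⟨b₀, hb₀, blockRel_refl b₀⟩ S
  refine ⟨mus, hmus₀, hmus, ?_⟩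
  rintro ℓ hℓ _ ⟨l, -, hlS, rfl⟩
  refine or_iff_not_imp_right.2 fun h => ?_
  push Not at h
  obtain ⟨b, hb₀, hb, hℓb⟩ := h
  rw [List.sum_eq_sum_count_nsmul hlS] at hℓb ⊢
  exact hmus_le ℓ hℓ _ b ⟨hb₀, hb⟩ hℓb

/-- Let `𝔐` be a distance monoid with finitely many blocks and `S ⊆ M` finite.
Then every nonzero block `B` (the block of a nonzero `b₀`) contains an element
`mus(B, S)` such that for all `ℓ ∈ S` and all `e ∈ S^⊕` (nonempty finite sums of
elements of `S`), either `ℓ ⪯ e ⊕ mus(B, S)` or `e ⊕ b ≺ ℓ` for every `b ∈ B`. -/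
theorem exists_mus {M : Type*} [AddCommMonoid M] [LinearOrder M]
    (hzero : ∀ a : M, 0 ≤ a)
    (hmono : ∀ a b c d : M, a ≤ c → b ≤ d → a + b ≤ c + d)
    (hfinblocks :
      {B : Set M | ∃ a : M, a ≠ 0 ∧ B = {x : M | x ≠ 0 ∧ blockRel a x}}.Finite)
    (S : Finset M) :
    ∀ b₀ : M, b₀ ≠ 0 →
      ∃ mus : M, mus ≠ 0 ∧ blockRel b₀ mus ∧
        ∀ ℓ ∈ S, ∀ e : M,
          (∃ l : List M, l ≠ [] ∧ (∀ x ∈ l, x ∈ S) ∧ l.sum = e) →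
          (ℓ ≤ e + mus ∨ ∀ b : M, b ≠ 0 → blockRel b₀ b → e + b < ℓ) :=
  exists_mus_general hzero hmono S
end

section
/- Let 𝔐 = (M, ⊕, ⪯, 0) be a distance monoid with only finitely many blocks and let S be a finite subset of M ∖ {0}. Then there exists an integer n = n(S) such that for every ℓ ∈ S and every finite sequence e_1, e_2, …, e_k of elements of S with ℓ ≻ e_1 ⊕ e_2 ⊕ ⋯ ⊕ e_k, there is a sequence f_1, f_2, …, f_m of elements of S satisfying: (1) (f_i) is a subsequence of (e_i) (obtained by deleting some terms while preserving order); (2) m < n; and (3) if (f_i) is a proper subsequence of (e_i) and a is the ⪯-largest deleted term, then for every b in the block of a (i.e., every b with b ~ a) one has ℓ ≻ b ⊕ f_1 ⊕ f_2 ⊕ ⋯ ⊕ f_m. -/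
open Filter Multiset
open scoped Pointwise

theorem Multiset.exists_sublist_of_le_coe {α : Type*} {l : List α} {s : Multiset α}
    (h : s ≤ l) : ∃ l' : List α, l'.Sublist l ∧ (l' : Multiset α) = s := by
  induction s using Quotient.inductionOn with
  | h s =>
    obtain ⟨l', hperm, hsub⟩ := Multiset.coe_le.1 h
    exact ⟨l', hsub, Multiset.coe_eq_coe.2 hperm⟩

section DistanceMonoid

variable {M : Type*} [AddCommMonoid M] [LinearOrder M]

def sumsOfCardLt (P : Finset M) (T : ℕ) : Finset M :=
  (Finset.range T).biUnion fun k => (P.sym k).image fun g : Sym M k => (g : Multiset M).sum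

theorem sum_mem_sumsOfCardLt {P : Finset M} {T : ℕ} {e : Multiset M} (he : ∀ t ∈ e, t ∈ P)
    (hT : card e < T) : e.sum ∈ sumsOfCardLt P T :=
  Finset.mem_biUnion.2 ⟨card e, Finset.mem_range.2 hT,
    Finset.mem_image.2 ⟨(⟨e, rfl⟩ : Sym M (card e)), Finset.mem_sym_iff.2 he, rfl⟩⟩

variable [IsOrderedAddMonoid M]

theorem card_lt_of_add_sum_lt {c ℓ x : M} {k : ℕ} {e : Multiset M} (hc : 0 ≤ c)
    (he : ∀ t ∈ e, c ≤ t) (hℓ : ℓ ≤ x + k • c) (hsum : x + e.sum < ℓ) : card e < k := by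
  by_contra! hk
  refine hsum.not_ge (hℓ.trans (add_le_add_right ?_ x))
  exact (nsmul_le_nsmul_left hc hk).trans (card_nsmul_le_sum he)

theorem eventually_le_add_nsmul_of_exists {s : M} (hs : 0 ≤ s) (ℓ x : M) :
    ∀ᶠ k : ℕ in atTop, (∃ j : ℕ, ℓ ≤ x + j • s) → ℓ ≤ x + k • s := by
  by_cases h : ∃ j : ℕ, ℓ ≤ x + j • s
  · obtain ⟨j, hj⟩ := h
    filter_upwards [eventually_ge_atTop j] with k hk _
    exact hj.trans (add_le_add_right (nsmul_le_nsmul_left hs hk) x)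
  · exact .of_forall fun _ h' => absurd h' h

theorem exists_short_submultiset (hzero : ∀ a : M, 0 ≤ a) (L S X : Finset M) :
    ∃ n : ℕ, ∀ ℓ ∈ L, ∀ x ∈ X, ∀ e : Multiset M, (∀ t ∈ e, t ∈ S) → x + e.sum < ℓ →
      ∃ f ≤ e, card f < n ∧ ∀ a ∈ e - f, ∀ m : ℕ, x + (m • a + f.sum) < ℓ := by
  classical
  induction S using Finset.strongInduction generalizing X with
  | H S ih =>
  rcases S.eq_empty_or_nonempty with rfl | hS
  · refine ⟨1, fun ℓ _ x _ e he _ => ⟨0, zero_le e, one_pos, fun a ha => ?_⟩⟩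
    simpa using he a (by simpa using ha)
  set s := S.max' hS
  set P := S.filter fun t => ∃ k : ℕ, s ≤ k • t
  have hsP : s ∈ P := Finset.mem_filter.2 ⟨S.max'_mem hS, 1, (one_nsmul s).ge⟩
  set c := P.min' ⟨s, hsP⟩
  obtain ⟨N, hN⟩ := (Finset.mem_filter.1 (P.min'_mem ⟨s, hsP⟩)).2
  obtain ⟨K, hK⟩ := ((eventually_all_finset L).2 fun ℓ _ => (eventually_all_finset X).2
    fun x _ => eventually_le_add_nsmul_of_exists (hzero s) ℓ x).exists
  have hPS : S.filter (· ∉ P) ⊂ S := Finset.filter_ssubset.2 ⟨s, S.max'_mem hS, not_not.2 hsP⟩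
  obtain ⟨n, hn⟩ := ih _ hPS (X + sumsOfCardLt P (K * N))
  refine ⟨K * N + n + 1, fun ℓ hℓ x hx e he hsum => ?_⟩
  by_cases hreach : ∃ j : ℕ, ℓ ≤ x + j • s
  · have hsplit := filter_add_not (· ∈ P) e
    set eP := e.filter (· ∈ P)
    set eR := e.filter (· ∉ P)
    rw [← hsplit, sum_add, ← add_assoc] at hsum
    have hcard : card eP < K * N := by
      refine card_lt_of_add_sum_lt (hzero c) (fun t ht => P.min'_le t (mem_filter.1 ht).2) ?_
        ((le_add_of_nonneg_right (hzero _)).trans_lt hsum)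
      calc ℓ ≤ x + K • s := hK ℓ hℓ x hx hreach
        _ ≤ x + K • N • c := add_le_add_right (nsmul_le_nsmul_right hN K) x
        _ = x + (K * N) • c := by rw [mul_nsmul']
    obtain ⟨f, hfR, hfn, hf⟩ := hn ℓ hℓ (x + eP.sum)
      (Finset.add_mem_add hx (sum_mem_sumsOfCardLt (fun t ht => (mem_filter.1 ht).2) hcard)) eR
      (fun t ht => Finset.mem_filter.2 ⟨he t (mem_of_mem_filter ht), (mem_filter.1 ht).2⟩) hsum
    refine ⟨eP + f, hsplit ▸ add_le_add_right hfR eP, by rw [card_add]; omega, fun a ha m => ?_⟩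
    rw [← hsplit, add_tsub_add_eq_tsub_left] at ha
    calc x + (m • a + (eP + f).sum) = x + eP.sum + (m • a + f.sum) := by rw [sum_add]; abel
      _ < ℓ := hf a ha m
  · refine ⟨0, zero_le e, by simp, fun a ha m => ?_⟩
    have has : a ≤ s := S.le_max' a (he a (by simpa using ha))
    calc x + (m • a + (0 : Multiset M).sum) ≤ x + m • s := by
          simpa using add_le_add_right (nsmul_le_nsmul_right has m) x
      _ < ℓ := not_le.1 fun h => hreach ⟨m, h⟩

end DistanceMonoid

theorem exists_important_subsequence_general {M : Type*} [AddCommMonoid M] [LinearOrder M]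
    (hzero : ∀ a : M, 0 ≤ a)
    (hmono : ∀ a b c d : M, a ≤ c → b ≤ d → a + b ≤ c + d)
    (S : Finset M) :
    ∃ n : ℕ, ∀ ℓ ∈ S, ∀ e : List M, (∀ x ∈ e, x ∈ S) → e.sum < ℓ →
      ∃ f : List M, f.Sublist e ∧ f.length < n ∧
        ∀ a : M, a ∈ ((e : Multiset M) - (f : Multiset M)) →
          (∀ x ∈ ((e : Multiset M) - (f : Multiset M)), x ≤ a) →
          ∀ b : M, b ≠ 0 → blockRel a b → b + f.sum < ℓ := by
  have : IsOrderedAddMonoid M := { add_le_add_left := fun _ _ h _ => hmono _ _ _ _ h le_rfl }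
  obtain ⟨n, hn⟩ := exists_short_submultiset hzero S S {0}
  refine ⟨n, fun ℓ hℓ e he hsum => ?_⟩
  obtain ⟨f, hfe, hfn, hf⟩ := hn ℓ hℓ 0 (Finset.mem_singleton_self 0) e he (by simpa)
  obtain ⟨f, hsub, rfl⟩ := Multiset.exists_sublist_of_le_coe hfe
  refine ⟨f, hsub, by simpa using hfn, fun a ha _ b _ ⟨⟨m, _, hbm⟩, _⟩ => ?_⟩
  calc b + f.sum ≤ 0 + (m • a + f.sum) := by simpa using add_le_add_left hbm f.sum
    _ < ℓ := by simpa using hf a ha m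

/-- Important and unimportant summands: for a distance monoid with finitely many
blocks and a finite `S ⊆ M \ {0}`, there is `n = n(S)` such that every sequence
`(e_i)` of elements of `S` with `ℓ ≻ e_1 ⊕ ⋯ ⊕ e_k` (`ℓ ∈ S`) has a subsequence
`(f_i)` of length `< n` such that, if `(f_i)` is proper and `a` is the `⪯`-largest
deleted term, then `ℓ ≻ b ⊕ f_1 ⊕ ⋯ ⊕ f_m` for every `b` in the block of `a`. -/
theorem exists_important_subsequence {M : Type*} [AddCommMonoid M] [LinearOrder M]
    (hzero : ∀ a : M, 0 ≤ a)
    (hmono : ∀ a b c d : M, a ≤ c → b ≤ d → a + b ≤ c + d)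
    (hfinblocks :
      {B : Set M | ∃ a : M, a ≠ 0 ∧ B = {x : M | x ≠ 0 ∧ blockRel a x}}.Finite)
    (S : Finset M) (hS : ∀ x ∈ S, x ≠ 0) :
    ∃ n : ℕ, ∀ ℓ ∈ S, ∀ e : List M, (∀ x ∈ e, x ∈ S) → e.sum < ℓ →
      ∃ f : List M, f.Sublist e ∧ f.length < n ∧
        ∀ a : M, a ∈ ((e : Multiset M) - (f : Multiset M)) →
          (∀ x ∈ ((e : Multiset M) - (f : Multiset M)), x ≤ a) →
          ∀ b : M, b ≠ 0 → blockRel a b → b + f.sum < ℓ :=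
  exists_important_subsequence_general hzero hmono S
end
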